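/- For a finite connected simple graph G, two distinct vertices x and y, and α ∈ [0,1), define h(α) = κ_α(x,y)/(1−α). Then h is monotonically increasing in α on [0,1) and bounded above by 2/d(x,y); in particular the limit defining the Lin–Lu–Yau curvature κ_LLY(x,y) = lim_{α→1⁻} h(α) exists and satisfies κ_LLY(x,y) ≤ 2/d(x,y). -/

import Mathlib

/-!
Write `D = d(x,y)` and `W_α` for the transport distance between `m_x^α` and `m_y^α`.

For `α ≤ β < 1` one has `m_x^β = c m_x^α + (1 - c) δ_x` with `c = (1 - β)/(1 - α)`, and likewise
at `y`. Mixing an arbitrary coupling of the `α`-walks with the coupling `δ_(x,y)` of the Dirac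
masses gives `W_β ≤ c W_α + (1 - c) D`, which after clearing denominators is exactly
`κ_α/(1 - α) ≤ κ_β/(1 - β)`.

Each lazy walk moves mass `1 - α` to distance one, so by the triangle inequality every coupling
costs at least `D - 2(1 - α)`; this is `κ_α/(1 - α) ≤ 2/D`. A monotone function bounded above
converges at the right end of its interval, which gives the limit and its bound.
-/

open Finset

/-- A probability measure on a finite set, given as a density. -/
def IsProbMeasure {V : Type*} [Fintype V] (m : V → ℝ) : Prop :=
  (∀ x, 0 ≤ m x) ∧ ∑ x, m x = 1

/-- A coupling between two probability measures on a finite set. -/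
def IsCoupling {V : Type*} [Fintype V] (A : V × V → ℝ) (m₁ m₂ : V → ℝ) : Prop :=
  (∀ p, 0 ≤ A p) ∧ (∀ x, ∑ y, A (x, y) = m₁ x) ∧ (∀ y, ∑ x, A (x, y) = m₂ y)

/-- The Wasserstein-1 (transportation) distance between two probability measures on a
finite set, with respect to a cost `d`. -/
noncomputable def W {V : Type*} [Fintype V] (d : V → V → ℝ) (m₁ m₂ : V → ℝ) : ℝ :=
  sInf {c | ∃ A, IsCoupling A m₁ m₂ ∧ c = ∑ p : V × V, A p * d p.1 p.2}

lemma W_symm {V : Type*} [Fintype V] (d : V → V → ℝ) (hd : ∀ x y, d x y = d y x)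
    (m₁ m₂ : V → ℝ) : W d m₁ m₂ = W d m₂ m₁ := by
  have key : ∀ m₁ m₂ : V → ℝ,
      {c | ∃ A, IsCoupling A m₁ m₂ ∧ c = ∑ p : V × V, A p * d p.1 p.2} ⊆
      {c | ∃ A, IsCoupling A m₂ m₁ ∧ c = ∑ p : V × V, A p * d p.1 p.2} := by
    rintro m₁ m₂ c ⟨A, ⟨h0, h1, h2⟩, rfl⟩
    refine ⟨fun p => A (p.2, p.1), ⟨fun p => h0 _, fun x => h2 x, fun y => h1 y⟩, ?_⟩
    refine Fintype.sum_equiv (Equiv.prodComm V V) _ _ ?_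
    intro p
    simp [Equiv.prodComm, hd p.1 p.2]
  unfold W
  congr 1
  exact Set.Subset.antisymm (key m₁ m₂) (key m₂ m₁)

/-- The `α`-lazy random walk measure at a vertex `x` of a graph. -/
noncomputable def lazyWalk {V : Type*} [Fintype V] [DecidableEq V] (G : SimpleGraph V)
    [DecidableRel G.Adj] (α : ℝ) (x : V) : V → ℝ :=
  fun v => if v = x then α else if G.Adj x v then (1 - α) / (G.degree x) else 0

/-- The `α`-Ricci curvature `κ_α(x,y) = 1 - W(m_x^α, m_y^α)/d(x,y)`. -/
noncomputable def kappaAlpha {V : Type*} [Fintype V] [DecidableEq V] (G : SimpleGraph V)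
    [DecidableRel G.Adj] (α : ℝ) (x y : V) : ℝ :=
  1 - W (fun a b => (G.dist a b : ℝ)) (lazyWalk G α x) (lazyWalk G α y) / (G.dist x y)

lemma kappaAlpha_symm {V : Type*} [Fintype V] [DecidableEq V] (G : SimpleGraph V)
    [DecidableRel G.Adj] (α : ℝ) (x y : V) :
    kappaAlpha G α x y = kappaAlpha G α y x := by
  unfold kappaAlpha
  rw [W_symm _ (fun a b => by rw [SimpleGraph.dist_comm]),
    SimpleGraph.dist_comm]

/-- The Lin–Lu–Yau Ricci curvature `κ_LLY(x,y) = lim_{α → 1⁻} κ_α(x,y)/(1-α)`. -/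
noncomputable def kappaLLY {V : Type*} [Fintype V] [DecidableEq V] (G : SimpleGraph V)
    [DecidableRel G.Adj] (x y : V) : ℝ :=
  Filter.limUnder (nhdsWithin 1 (Set.Ico (0:ℝ) 1)) (fun α => kappaAlpha G α x y / (1 - α))

lemma kappaLLY_symm {V : Type*} [Fintype V] [DecidableEq V] (G : SimpleGraph V)
    [DecidableRel G.Adj] (x y : V) : kappaLLY G x y = kappaLLY G y x := by
  unfold kappaLLY
  congr 1
  funext α
  rw [kappaAlpha_symm]

/-- Integral `α`-Ricci curvature `I^α_{κ₀}`: total amount of `α`-Ricci curvature below the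
threshold `(1-α)κ₀`, summed over the edges of `G`. -/
noncomputable def IAlpha {V : Type*} [Fintype V] [DecidableEq V] (G : SimpleGraph V)
    [DecidableRel G.Adj] (α κ₀ : ℝ) : ℝ :=
  ∑ e ∈ G.edgeFinset,
    Sym2.lift ⟨fun x y => max 0 ((1 - α) * κ₀ - kappaAlpha G α x y),
      fun x y => by simp only []; rw [kappaAlpha_symm]⟩ e

/-- Integral Lin–Lu–Yau Ricci curvature `I_{κ₀}`: total amount of Lin–Lu–Yau Ricci curvature
below the threshold `κ₀`, summed over the edges of `G`. -/
noncomputable def ILLY {V : Type*} [Fintype V] [DecidableEq V] (G : SimpleGraph V)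
    [DecidableRel G.Adj] (κ₀ : ℝ) : ℝ :=
  ∑ e ∈ G.edgeFinset,
    Sym2.lift ⟨fun x y => max 0 (κ₀ - kappaLLY G x y),
      fun x y => by simp only []; rw [kappaLLY_symm]⟩ e

/-- The diameter of a finite graph. -/
noncomputable def gDiam {V : Type*} [Fintype V] (G : SimpleGraph V) : ℕ :=
  Finset.univ.sup fun p : V × V => G.dist p.1 p.2

section Transport

variable {V : Type*} [Fintype V] {d : V → V → ℝ} {m₁ m₂ n₁ n₂ : V → ℝ} {A B : V × V → ℝ}

lemma IsProbMeasure.isCoupling_prod (h₁ : IsProbMeasure m₁) (h₂ : IsProbMeasure m₂) :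
    IsCoupling (fun p => m₁ p.1 * m₂ p.2) m₁ m₂ :=
  ⟨fun p => mul_nonneg (h₁.1 _) (h₂.1 _),
    fun x => by simp only [← mul_sum, h₂.2, mul_one],
    fun y => by simp only [← sum_mul, h₁.2, one_mul]⟩

lemma IsCoupling.sum_eq_one (hA : IsCoupling A m₁ m₂) (h₁ : ∑ x, m₁ x = 1) :
    ∑ p, A p = 1 := by
  rw [Fintype.sum_prod_type]
  simp only [hA.2.1, h₁]

lemma IsCoupling.convexComb (hA : IsCoupling A m₁ m₂) (hB : IsCoupling B n₁ n₂) {c : ℝ}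
    (hc₀ : 0 ≤ c) (hc₁ : c ≤ 1) :
    IsCoupling (c • A + (1 - c) • B) (c • m₁ + (1 - c) • n₁) (c • m₂ + (1 - c) • n₂) := by
  refine ⟨fun p => ?_, fun x => ?_, fun y => ?_⟩
  · have := hA.1 p
    have := hB.1 p
    simp only [Pi.add_apply, Pi.smul_apply, smul_eq_mul]
    nlinarith
  · simp only [Pi.add_apply, Pi.smul_apply, smul_eq_mul, sum_add_distrib, ← mul_sum,
      hA.2.1, hB.2.1]
  · simp only [Pi.add_apply, Pi.smul_apply, smul_eq_mul, sum_add_distrib, ← mul_sum,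
      hA.2.2, hB.2.2]

lemma isCoupling_single [DecidableEq V] (x y : V) :
    IsCoupling (Pi.single (x, y) 1) (Pi.single x 1) (Pi.single y 1) := by
  refine ⟨fun p => ?_, fun u => ?_, fun v => ?_⟩
  · rw [Pi.single_apply]
    positivity
  · by_cases hu : u = x <;> simp [Pi.single_apply, Prod.ext_iff, hu]
  · by_cases hv : v = y <;> simp [Pi.single_apply, Prod.ext_iff, hv]

lemma W_le_of_isCoupling (hd : ∀ a b, 0 ≤ d a b) (hA : IsCoupling A m₁ m₂) :
    W d m₁ m₂ ≤ ∑ p, A p * d p.1 p.2 :=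
  csInf_le ⟨0, by
    rintro _ ⟨B, hB, rfl⟩
    exact sum_nonneg fun p _ => mul_nonneg (hB.1 p) (hd _ _)⟩ ⟨A, hA, rfl⟩

lemma le_W_of_forall_isCoupling (h₁ : IsProbMeasure m₁) (h₂ : IsProbMeasure m₂) {c : ℝ}
    (h : ∀ A, IsCoupling A m₁ m₂ → c ≤ ∑ p, A p * d p.1 p.2) : c ≤ W d m₁ m₂ :=
  le_csInf ⟨_, _, h₁.isCoupling_prod h₂, rfl⟩ (by rintro _ ⟨A, hA, rfl⟩; exact h A hA)

lemma W_convexComb_le (hd : ∀ a b, 0 ≤ d a b) (h₁ : IsProbMeasure m₁)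
    (h₂ : IsProbMeasure m₂) (hB : IsCoupling B n₁ n₂) {c : ℝ} (hc₀ : 0 < c) (hc₁ : c ≤ 1) :
    W d (c • m₁ + (1 - c) • n₁) (c • m₂ + (1 - c) • n₂) ≤
      c * W d m₁ m₂ + (1 - c) * ∑ p, B p * d p.1 p.2 := by
  set costB := ∑ p, B p * d p.1 p.2
  suffices (W d (c • m₁ + (1 - c) • n₁) (c • m₂ + (1 - c) • n₂) - (1 - c) * costB) / c ≤
      W d m₁ m₂ by
    rw [div_le_iff₀ hc₀] at this
    linarith
  refine le_W_of_forall_isCoupling h₁ h₂ fun A hA => ?_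
  have hW := W_le_of_isCoupling hd (hA.convexComb hB hc₀.le hc₁)
  have hcost : ∑ p, (c • A + (1 - c) • B) p * d p.1 p.2 =
      c * ∑ p, A p * d p.1 p.2 + (1 - c) * costB := by
    simp only [costB, Pi.add_apply, Pi.smul_apply, smul_eq_mul, add_mul, sum_add_distrib,
      mul_assoc, ← mul_sum]
  rw [div_le_iff₀ hc₀]
  linarith

lemma sub_sub_le_cost (hd : ∀ a b c, d a c ≤ d a b + d b c) (hA : IsCoupling A m₁ m₂)
    (h₁ : ∑ u, m₁ u = 1) (x y : V) :
    d x y - ∑ u, m₁ u * d x u - ∑ v, m₂ v * d v y ≤ ∑ p, A p * d p.1 p.2 := by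
  have h₁' : ∑ u, m₁ u * d x u = ∑ p, A p * d x p.1 := by
    simp only [Fintype.sum_prod_type, ← sum_mul, hA.2.1]
  have h₂' : ∑ v, m₂ v * d v y = ∑ p, A p * d p.2 y := by
    simp only [Fintype.sum_prod_type_right, ← sum_mul, hA.2.2]
  rw [h₁', h₂', ← one_mul (d x y), ← hA.sum_eq_one h₁, sum_mul, ← sum_sub_distrib,
    ← sum_sub_distrib]
  refine sum_le_sum fun p _ => ?_
  have := hd x p.1 y
  have := hd p.1 p.2 y
  nlinarith [hA.1 p]

lemma sub_sub_le_W (hd : ∀ a b c, d a c ≤ d a b + d b c)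
    (h₁ : IsProbMeasure m₁) (h₂ : IsProbMeasure m₂) (x y : V) :
    d x y - ∑ u, m₁ u * d x u - ∑ v, m₂ v * d v y ≤ W d m₁ m₂ :=
  le_W_of_forall_isCoupling h₁ h₂ fun _ hA => sub_sub_le_cost hd hA h₁.2 x y

end Transport

section LazyWalk

variable {V : Type*} [Fintype V] [DecidableEq V] (G : SimpleGraph V) [DecidableRel G.Adj]
  {α β : ℝ} {x y : V}

lemma sum_lazyWalk_mul_dist (hx : 0 < G.degree x) :
    ∑ v, lazyWalk G α x v * G.dist x v = 1 - α := by
  have hv : ∀ v, lazyWalk G α x v * G.dist x v =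
      if G.Adj x v then (1 - α) / G.degree x else 0 := by
    intro v
    by_cases h : v = x
    · subst h
      simp [lazyWalk]
    · by_cases ha : G.Adj x v
      · simp [lazyWalk, h, ha, SimpleGraph.dist_eq_one_iff_adj.2 ha]
      · simp [lazyWalk, h, ha]
  rw [sum_congr rfl fun v _ => hv v, ← sum_filter, ← SimpleGraph.neighborFinset_eq_filter,
    sum_const, SimpleGraph.card_neighborFinset_eq_degree, nsmul_eq_mul]
  field_simp

lemma isProbMeasure_lazyWalk (h₀ : 0 ≤ α) (h₁ : α ≤ 1) (hx : 0 < G.degree x) :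
    IsProbMeasure (lazyWalk G α x) := by
  refine ⟨fun v => ?_, ?_⟩
  · unfold lazyWalk
    split_ifs
    · exact h₀
    · exact div_nonneg (by linarith) (Nat.cast_nonneg _)
    · exact le_rfl
  · have hv : ∀ v, lazyWalk G α x v =
        (if v = x then α else 0) + if G.Adj x v then (1 - α) / G.degree x else 0 := by
      intro v
      by_cases h : v = x
      · subst h
        simp [lazyWalk]
      · simp [lazyWalk, h]
    simp only [hv, sum_add_distrib, sum_ite_eq', mem_univ, if_true, ← sum_filter,
      ← SimpleGraph.neighborFinset_eq_filter, sum_const,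
      SimpleGraph.card_neighborFinset_eq_degree, nsmul_eq_mul]
    field_simp
    ring

lemma lazyWalk_eq_convexComb (hα : α ≠ 1) (x : V) :
    lazyWalk G β x = ((1 - β) / (1 - α)) • lazyWalk G α x +
      (1 - (1 - β) / (1 - α)) • Pi.single x 1 := by
  have h : (1 : ℝ) - α ≠ 0 := sub_ne_zero.2 (Ne.symm hα)
  funext v
  simp only [Pi.add_apply, Pi.smul_apply, smul_eq_mul, Pi.single_apply, lazyWalk]
  by_cases hv : v = x
  · simp only [hv, if_true]
    field_simp
    ring
  · by_cases ha : G.Adj x v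
    · simp only [hv, ha, if_true, if_false, mul_zero, add_zero]
      field_simp
    · simp [hv, ha]

lemma dist_sub_le_W_lazyWalk (hG : G.Connected) (h₀ : 0 ≤ α) (h₁ : α ≤ 1)
    (hx : 0 < G.degree x) (hy : 0 < G.degree y) :
    G.dist x y - 2 * (1 - α) ≤
      W (fun a b => (G.dist a b : ℝ)) (lazyWalk G α x) (lazyWalk G α y) := by
  have hW := sub_sub_le_W (d := fun a b => (G.dist a b : ℝ))
    (fun _ _ _ => by exact_mod_cast hG.dist_triangle) (isProbMeasure_lazyWalk G h₀ h₁ hx)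
    (isProbMeasure_lazyWalk G h₀ h₁ hy) x y
  have hy' : ∑ v, lazyWalk G α y v * (G.dist v y : ℝ) = 1 - α := by
    rw [← sum_lazyWalk_mul_dist G hy]
    exact sum_congr rfl fun v _ => by rw [SimpleGraph.dist_comm]
  rw [sum_lazyWalk_mul_dist G hx, hy'] at hW
  linarith

lemma W_lazyWalk_le (h₀ : 0 ≤ α) (hαβ : α ≤ β) (hβ : β < 1)
    (hx : 0 < G.degree x) (hy : 0 < G.degree y) :
    (1 - α) * W (fun a b => (G.dist a b : ℝ)) (lazyWalk G β x) (lazyWalk G β y) ≤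
      (1 - β) * W (fun a b => (G.dist a b : ℝ)) (lazyWalk G α x) (lazyWalk G α y) +
        (β - α) * G.dist x y := by
  have hα : 0 < 1 - α := by linarith
  set c := (1 - β) / (1 - α)
  have hc₀ : 0 < c := div_pos (by linarith) hα
  have hc₁ : c ≤ 1 := (div_le_one hα).2 (by linarith)
  have hcost : ∑ p : V × V, (Pi.single (x, y) 1 : V × V → ℝ) p * G.dist p.1 p.2 = G.dist x y := by
    simp [Pi.single_apply, ite_mul]
  have hW := W_convexComb_le (d := fun a b => (G.dist a b : ℝ)) (fun _ _ => Nat.cast_nonneg _)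
    (isProbMeasure_lazyWalk G h₀ (by linarith) hx) (isProbMeasure_lazyWalk G h₀ (by linarith) hy)
    (isCoupling_single x y) hc₀ hc₁
  rw [← lazyWalk_eq_convexComb G (sub_pos.1 hα).ne x,
    ← lazyWalk_eq_convexComb G (sub_pos.1 hα).ne y, hcost] at hW
  have hexpand : ∀ w : ℝ,
      (1 - α) * (c * w + (1 - c) * G.dist x y) = (1 - β) * w + (β - α) * G.dist x y := by
    intro w
    simp only [c]
    field_simp
    ring
  exact hexpand _ ▸ mul_le_mul_of_nonneg_left hW hα.le

end LazyWalk

section Curvature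

variable {V : Type*} [Fintype V] [DecidableEq V] (G : SimpleGraph V) [DecidableRel G.Adj]
  {x y : V}

lemma kappaAlpha_div_le_two_div_dist (hG : G.Connected) (hxy : x ≠ y) {α : ℝ} (h₀ : 0 ≤ α)
    (h₁ : α < 1) :
    kappaAlpha G α x y / (1 - α) ≤ 2 / G.dist x y := by
  have hD : (0 : ℝ) < G.dist x y := by exact_mod_cast hG.pos_dist_of_ne hxy
  have hW := dist_sub_le_W_lazyWalk G hG h₀ h₁.le ((hG.preconnected x y).degree_pos_left hxy)
    ((hG.preconnected x y).degree_pos_right hxy)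
  unfold kappaAlpha
  rw [div_le_div_iff₀ (by linarith) hD, sub_mul, one_mul, div_mul_cancel₀ _ hD.ne']
  linarith

lemma monotoneOn_kappaAlpha_div (hG : G.Connected) (hxy : x ≠ y) :
    MonotoneOn (fun α => kappaAlpha G α x y / (1 - α)) (Set.Ico 0 1) := by
  intro α hα β hβ hαβ
  have hD : (0 : ℝ) < G.dist x y := by exact_mod_cast hG.pos_dist_of_ne hxy
  have hα₁ : 0 < 1 - α := by linarith [hα.2]
  have hβ₁ : 0 < 1 - β := by linarith [hβ.2]
  have hW := W_lazyWalk_le G hα.1 hαβ hβ.2 ((hG.preconnected x y).degree_pos_left hxy)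
    ((hG.preconnected x y).degree_pos_right hxy)
  simp only [kappaAlpha]
  rw [div_le_div_iff₀ hα₁ hβ₁, ← mul_le_mul_iff_of_pos_right hD]
  field_simp
  linarith

end Curvature

open Filter Topology in
lemma MonotoneOn.tendsto_limUnder_nhdsWithin_Ico {f : ℝ → ℝ} {a b : ℝ} (hab : a < b)
    (hf : MonotoneOn f (Set.Ico a b)) (hbdd : BddAbove (f '' Set.Ico a b)) :
    Tendsto f (𝓝[Set.Ico a b] b) (𝓝 (limUnder (𝓝[Set.Ico a b] b) f)) := by
  refine tendsto_nhds_limUnder ⟨sSup (f '' Set.Ioo a b), ?_⟩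
  rw [nhdsWithin_Ico_eq_nhdsLT hab]
  exact (hf.mono Set.Ioo_subset_Ico_self).tendsto_nhdsWithin_Ioo_left (Set.nonempty_Ioo.2 hab)
    (hbdd.mono (Set.image_mono Set.Ioo_subset_Ico_self))

/-- `κ_α(x,y)/(1-α)` is increasing in `α` and bounded by `2/d(x,y)`; so the limit defining
the Lin–Lu–Yau curvature exists and satisfies `κ_LLY(x,y) ≤ 2/d(x,y)`. -/
theorem stmt_7 {V : Type*} [Fintype V] [DecidableEq V] (G : SimpleGraph V)
    [DecidableRel G.Adj] (hG : G.Connected) (x y : V) (hxy : x ≠ y) :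
    MonotoneOn (fun α => kappaAlpha G α x y / (1 - α)) (Set.Ico (0:ℝ) 1) ∧
    (∀ α ∈ Set.Ico (0:ℝ) 1, kappaAlpha G α x y / (1 - α) ≤ 2 / (G.dist x y)) ∧
    Filter.Tendsto (fun α => kappaAlpha G α x y / (1 - α))
      (nhdsWithin 1 (Set.Ico (0:ℝ) 1)) (nhds (kappaLLY G x y)) ∧
    kappaLLY G x y ≤ 2 / (G.dist x y) := by
  have hmono := monotoneOn_kappaAlpha_div G hG hxy
  have hbound : ∀ α ∈ Set.Ico (0:ℝ) 1, kappaAlpha G α x y / (1 - α) ≤ 2 / G.dist x y :=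
    fun α hα => kappaAlpha_div_le_two_div_dist G hG hxy hα.1 hα.2
  have hlim := hmono.tendsto_limUnder_nhdsWithin_Ico one_pos
    ⟨_, Set.forall_mem_image.2 hbound⟩
  have := right_nhdsWithin_Ico_neBot (zero_lt_one' ℝ)
  exact ⟨hmono, hbound, hlim, le_of_tendsto hlim (eventually_nhdsWithin_of_forall hbound)⟩
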